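/- arXiv:2310.00544 — 2 statements merged into one kernel-verified Lean document; each statement's English description precedes it below -/
import Mathlib

section
/- Let E be a Polish space, let ρ_N be a symmetric probability measure on E^N (i.e., invariant under permutations of the coordinates), and let ρ be a probability measure on E. Then for every 1 ≤ k ≤ N, the scaled relative entropies satisfy (1/k) H(ρ_{N,k} | ρ^{⊗k}) ≤ (1/N) H(ρ_N | ρ^{⊗N}), where ρ_{N,k} denotes the marginal of ρ_N on the first k coordinates. -/
/-
Write `D(P)` for the relative entropy of a law `P` on `E^n` with respect to `ρ^{⊗n}`, and `P'`
for its marginal on the first `n - 1` coordinates. Disintegrating `P` over `P'` (`E` is standard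
Borel), the chain rule gives `D(P) = D(P') + c(P)`, where `c(P)` is the divergence of `P` from
`P' ⊗ ρ`. For exchangeable `P`, the coordinates `2, …, n` have the same joint law as
`1, …, n - 1`, so dropping the first coordinate and applying data processing gives
`c(P') ≤ c(P)`. Thus `D(P)` is a sum of `n` nondecreasing increments, whence
`D(P') ≤ (n - 1) c(P)`, which is Han's inequality `n D(P') ≤ (n - 1) D(P)`; iterating it shows
that `D(P_k) / k` is nondecreasing in `k`.
-/

open MeasureTheory Real
open scoped Classical

noncomputable section

/-- Relative entropy `H(μ|ν) = ∫ log (dμ/dν) dμ` if `μ ≪ ν` (and the integral is defined),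
`+∞` otherwise, valued in `EReal`. -/
def relEnt {E : Type*} [MeasurableSpace E] (μ ν : Measure E) : EReal :=
  if μ ≪ ν ∧ Integrable (fun x => Real.log ((μ.rnDeriv ν x).toReal)) μ
  then ((∫ x, Real.log ((μ.rnDeriv ν x).toReal) ∂μ : ℝ) : EReal)
  else ⊤

open ProbabilityTheory InformationTheory
open scoped ENNReal

section KL

variable {α β : Type*} [MeasurableSpace α] [MeasurableSpace β]

lemma relEnt_eq_klDiv (μ ν : Measure α) [IsProbabilityMeasure μ] [IsProbabilityMeasure ν] :
    relEnt μ ν = klDiv μ ν := by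
  rw [relEnt, ← llr_def]
  by_cases h : μ ≪ ν ∧ Integrable (llr μ ν) μ
  · have hnonneg := integral_llr_add_sub_measure_univ_nonneg h.1 h.2
    simp only [probReal_univ, add_sub_cancel_right] at hnonneg
    rw [if_pos h, klDiv_of_ac_of_integrable h.1 h.2, EReal.coe_ennreal_ofReal]
    simp [hnonneg]
  · rw [if_neg h, klDiv_def, if_neg h, EReal.coe_ennreal_top]

lemma klDiv_map_measurableEquiv (μ ν : Measure α) [IsFiniteMeasure μ] [IsFiniteMeasure ν]
    (e : α ≃ᵐ β) : klDiv (μ.map e) (ν.map e) = klDiv μ ν := by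
  refine le_antisymm (klDiv_map_le μ ν e.measurable) ?_
  calc klDiv μ ν = klDiv ((μ.map e).map e.symm) ((ν.map e).map e.symm) := by
        simp only [MeasurableEquiv.map_symm_map]
    _ ≤ klDiv (μ.map e) (ν.map e) := klDiv_map_le _ _ e.symm.measurable

lemma klDiv_prod_eq_klDiv_fst_add [StandardBorelSpace β] [Nonempty β] (μ : Measure (α × β))
    [IsFiniteMeasure μ] (ν : Measure α) [IsFiniteMeasure ν] (ρ : Measure β)
    [IsProbabilityMeasure ρ] :
    klDiv μ (ν.prod ρ) = klDiv μ.fst ν + klDiv μ (μ.fst.prod ρ) := by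
  have h := klDiv_compProd_eq_add μ.fst ν μ.condKernel (Kernel.const α ρ)
  rwa [Measure.compProd_const, Measure.compProd_const, μ.disintegrate μ.condKernel] at h

lemma klDiv_eq_zero_of_subsingleton [Subsingleton α] (μ ν : Measure α) [IsProbabilityMeasure μ]
    [IsProbabilityMeasure ν] : klDiv μ ν = 0 := by
  have : μ = ν := by
    ext s -
    rcases s.eq_empty_or_nonempty with rfl | hs
    · simp
    · simp [hs.eq_univ]
  rw [this, klDiv_self]

end KL

section Exchangeable

variable {E ι : Type*} [MeasurableSpace E]

def IsExchangeable (P : Measure (ι → E)) : Prop :=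
  ∀ σ : Equiv.Perm ι, P.map (fun x => x ∘ σ) = P

lemma measurable_comp_right {κ : Type*} (m : κ → ι) :
    Measurable (fun x : ι → E => x ∘ m) :=
  measurable_pi_lambda _ fun i => measurable_pi_apply (m i)

lemma IsExchangeable.map_comp_eq {P : Measure (ι → E)} (hP : IsExchangeable P) {κ : Type*}
    [Finite κ] {m m' : κ → ι} (hm : m.Injective) (hm' : m'.Injective) :
    P.map (fun x => x ∘ m) = P.map (fun x => x ∘ m') := by
  obtain ⟨σ, hσ⟩ := Equiv.Perm.exists_extending_pair m m' hm hm'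
  have hcomp : (fun x : ι → E => x ∘ m') = (fun x => x ∘ m) ∘ (fun x => x ∘ σ) := by
    funext x i
    simp [hσ]
  rw [hcomp, ← Measure.map_map (measurable_comp_right m) (measurable_comp_right σ), hP σ]

lemma IsExchangeable.map_comp {P : Measure (ι → E)} (hP : IsExchangeable P) {κ : Type*}
    [Finite κ] {m : κ → ι} (hm : m.Injective) : IsExchangeable (P.map (fun x => x ∘ m)) := by
  intro σ
  rw [Measure.map_map (measurable_comp_right σ) (measurable_comp_right m)]
  exact hP.map_comp_eq (hm.comp σ.injective) hm

end Exchangeable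

section FinCoordinates

variable {E : Type*} [MeasurableSpace E] {n : ℕ}

lemma measurable_init : Measurable (Fin.init : (Fin (n + 1) → E) → Fin n → E) :=
  measurable_comp_right Fin.castSucc

lemma measurable_tail : Measurable (Fin.tail : (Fin (n + 1) → E) → Fin n → E) :=
  measurable_comp_right Fin.succ

lemma IsExchangeable.map_init {P : Measure (Fin (n + 1) → E)} (hP : IsExchangeable P) :
    IsExchangeable (P.map Fin.init) :=
  hP.map_comp (Fin.castSucc_injective _)

def piFinInitLast (n : ℕ) : (Fin (n + 1) → E) ≃ᵐ (Fin n → E) × E :=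
  (MeasurableEquiv.piFinSuccAbove (fun _ => E) (Fin.last n)).trans MeasurableEquiv.prodComm

lemma piFinInitLast_apply (x : Fin (n + 1) → E) :
    piFinInitLast n x = (Fin.init x, x (Fin.last n)) := by
  ext i <;> simp [piFinInitLast, Fin.init, MeasurableEquiv.prodComm]

lemma map_piFinInitLast_pi (ρ : Measure E) [SigmaFinite ρ] :
    (Measure.pi fun _ => ρ).map (piFinInitLast n) = (Measure.pi fun _ => ρ).prod ρ :=
  ((measurePreserving_piFinSuccAbove (fun _ => ρ) (Fin.last n)).trans
    Measure.measurePreserving_swap).map_eq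

lemma fst_map_piFinInitLast (P : Measure (Fin (n + 1) → E)) :
    (P.map (piFinInitLast n)).fst = P.map Fin.init := by
  rw [Measure.fst, Measure.map_map measurable_fst (piFinInitLast n).measurable]
  congr 1
  funext x
  simp [piFinInitLast_apply]

/-- The conditional relative entropy, with respect to `ρ`, of the last coordinate given the
others. -/
def condKlDivLast (P : Measure (Fin (n + 1) → E)) (ρ : Measure E) : ℝ≥0∞ :=
  klDiv (P.map (piFinInitLast n)) ((P.map Fin.init).prod ρ)

lemma condKlDivLast_map_init_le {P : Measure (Fin (n + 2) → E)} [IsFiniteMeasure P]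
    (hP : IsExchangeable P) (ρ : Measure E) [IsFiniteMeasure ρ] :
    condKlDivLast (P.map Fin.init) ρ ≤ condKlDivLast P ρ := by
  have hg : Measurable (Prod.map Fin.tail id : (Fin (n + 1) → E) × E → (Fin n → E) × E) :=
    measurable_tail.prodMap measurable_id
  have h_joint : (P.map (piFinInitLast (n + 1))).map (Prod.map Fin.tail id)
      = (P.map Fin.init).map (piFinInitLast n) := by
    have h_shift : P.map (fun x => x ∘ Fin.succ) = P.map Fin.init :=
      hP.map_comp_eq (Fin.succ_injective _) (Fin.castSucc_injective _)
    have h_comm : Prod.map Fin.tail id ∘ piFinInitLast (n + 1)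
        = piFinInitLast n ∘ (fun x : Fin (n + 2) → E => x ∘ Fin.succ) := by
      funext x
      simp only [Function.comp_apply, piFinInitLast_apply, Prod.map_apply, id]
      rfl
    rw [Measure.map_map hg (piFinInitLast _).measurable, h_comm,
      ← Measure.map_map (piFinInitLast n).measurable (measurable_comp_right _), h_shift]
  have h_prod : ((P.map Fin.init).prod ρ).map (Prod.map Fin.tail id)
      = ((P.map Fin.init).map Fin.init).prod ρ := by
    have h_shift : (P.map Fin.init).map Fin.tail = (P.map Fin.init).map Fin.init :=
      hP.map_init.map_comp_eq (Fin.succ_injective _) (Fin.castSucc_injective _)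
    rw [← Measure.map_prod_map _ _ measurable_tail measurable_id, Measure.map_id, h_shift]
  rw [condKlDivLast, condKlDivLast, ← h_joint, ← h_prod]
  exact klDiv_map_le _ _ hg

variable [StandardBorelSpace E]

lemma klDiv_pi_eq_add (P : Measure (Fin (n + 1) → E)) [IsFiniteMeasure P]
    (ρ : Measure E) [IsProbabilityMeasure ρ] :
    klDiv P (Measure.pi fun _ => ρ)
      = klDiv (P.map Fin.init) (Measure.pi fun _ => ρ) + condKlDivLast P ρ := by
  have := nonempty_of_isProbabilityMeasure ρ
  rw [← klDiv_map_measurableEquiv P _ (piFinInitLast n), map_piFinInitLast_pi,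
    klDiv_prod_eq_klDiv_fst_add, fst_map_piFinInitLast, condKlDivLast]

lemma klDiv_map_init_le_mul {P : Measure (Fin (n + 1) → E)} [IsProbabilityMeasure P]
    (hP : IsExchangeable P) (ρ : Measure E) [IsProbabilityMeasure ρ] :
    klDiv (P.map Fin.init) (Measure.pi fun _ => ρ) ≤ n * condKlDivLast P ρ := by
  induction n with
  | zero =>
    have : IsProbabilityMeasure (P.map Fin.init) :=
      Measure.isProbabilityMeasure_map measurable_init.aemeasurable
    simp [klDiv_eq_zero_of_subsingleton]
  | succ n ih =>
    have : IsProbabilityMeasure (P.map Fin.init) :=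
      Measure.isProbabilityMeasure_map measurable_init.aemeasurable
    calc klDiv (P.map Fin.init) (Measure.pi fun _ => ρ)
        = klDiv ((P.map Fin.init).map Fin.init) (Measure.pi fun _ => ρ)
            + condKlDivLast (P.map Fin.init) ρ := klDiv_pi_eq_add _ ρ
      _ ≤ n * condKlDivLast (P.map Fin.init) ρ + condKlDivLast (P.map Fin.init) ρ := by
        gcongr
        exact ih hP.map_init
      _ = (n + 1 : ℕ) * condKlDivLast (P.map Fin.init) ρ := by push_cast; ring
      _ ≤ (n + 1 : ℕ) * condKlDivLast P ρ := by
        gcongr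
        exact condKlDivLast_map_init_le hP ρ

/-- Han's inequality, for exchangeable laws. -/
theorem mul_klDiv_map_init_le {P : Measure (Fin (n + 1) → E)} [IsProbabilityMeasure P]
    (hP : IsExchangeable P) (ρ : Measure E) [IsProbabilityMeasure ρ] :
    (n + 1 : ℕ) * klDiv (P.map Fin.init) (Measure.pi fun _ => ρ)
      ≤ n * klDiv P (Measure.pi fun _ => ρ) := by
  rw [klDiv_pi_eq_add P ρ, mul_add]
  push_cast
  rw [add_mul, one_mul]
  gcongr
  exact klDiv_map_init_le_mul hP ρ

theorem inv_mul_klDiv_map_init_le {P : Measure (Fin (n + 1) → E)} [IsProbabilityMeasure P]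
    (hP : IsExchangeable P) (ρ : Measure E) [IsProbabilityMeasure ρ] (hn : n ≠ 0) :
    (n : ℝ≥0∞)⁻¹ * klDiv (P.map Fin.init) (Measure.pi fun _ => ρ)
      ≤ ((n + 1 : ℕ) : ℝ≥0∞)⁻¹ * klDiv P (Measure.pi fun _ => ρ) := by
  rw [ENNReal.inv_mul_le_iff (by simpa) (by simp), mul_left_comm,
    ← ENNReal.mul_le_iff_le_inv (by simp) (by simp)]
  exact mul_klDiv_map_init_le hP ρ

theorem inv_mul_klDiv_map_castLE_le {N : ℕ} {P : Measure (Fin N → E)} [IsProbabilityMeasure P]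
    (hP : IsExchangeable P) (ρ : Measure E) [IsProbabilityMeasure ρ] {k : ℕ} (hk : k ≠ 0)
    (hkN : k ≤ N) :
    (k : ℝ≥0∞)⁻¹ * klDiv (P.map fun x => x ∘ Fin.castLE hkN) (Measure.pi fun _ => ρ)
      ≤ (N : ℝ≥0∞)⁻¹ * klDiv P (Measure.pi fun _ => ρ) := by
  induction N, hkN using Nat.le_induction with
  | base => exact le_of_eq (by congr; exact Measure.map_id)
  | succ N hkN ih =>
    have : IsProbabilityMeasure (P.map Fin.init) :=
      Measure.isProbabilityMeasure_map measurable_init.aemeasurable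
    have h_tower : P.map (fun x => x ∘ Fin.castLE (hkN.trans N.le_succ))
        = (P.map Fin.init).map (fun x => x ∘ Fin.castLE hkN) := by
      rw [Measure.map_map (measurable_comp_right _) measurable_init]
      rfl
    rw [h_tower]
    exact (ih hP.map_init).trans (inv_mul_klDiv_map_init_le hP ρ (by omega))

end FinCoordinates

lemma EReal.coe_inv_natCast {n : ℕ} (hn : n ≠ 0) :
    (((n : ℝ)⁻¹ : ℝ) : EReal) = (((n : ℝ≥0∞)⁻¹ : ℝ≥0∞) : EReal) := by
  rw [← ENNReal.ofReal_natCast, ← ENNReal.ofReal_inv_of_pos (by positivity),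
    EReal.coe_ennreal_ofReal, max_eq_left (by positivity)]

theorem scaled_relative_entropy_monotone_general
    {E : Type*} [MeasurableSpace E] [TopologicalSpace E] [PolishSpace E] [BorelSpace E]
    (N : ℕ) (ρN : Measure (Fin N → E)) [IsProbabilityMeasure ρN]
    (hsymm : ∀ σ : Equiv.Perm (Fin N), Measure.map (fun x => x ∘ σ) ρN = ρN)
    (ρ : Measure E) [IsProbabilityMeasure ρ]
    (k : ℕ) (hk1 : 1 ≤ k) (hkN : k ≤ N) :
    (((k : ℝ)⁻¹ : ℝ) : EReal) *
        relEnt (Measure.map (fun x (i : Fin k) => x (Fin.castLE hkN i)) ρN)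
          (Measure.pi fun _ : Fin k => ρ)
      ≤ (((N : ℝ)⁻¹ : ℝ) : EReal) * relEnt ρN (Measure.pi fun _ : Fin N => ρ) := by
  have : IsProbabilityMeasure (ρN.map fun x (i : Fin k) => x (Fin.castLE hkN i)) :=
    Measure.isProbabilityMeasure_map (measurable_comp_right _).aemeasurable
  rw [relEnt_eq_klDiv, relEnt_eq_klDiv, EReal.coe_inv_natCast (by omega),
    EReal.coe_inv_natCast (by omega), ← EReal.coe_ennreal_mul, ← EReal.coe_ennreal_mul,
    EReal.coe_ennreal_le_coe_ennreal_iff]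
  exact inv_mul_klDiv_map_castLE_le hsymm ρ (by omega) hkN

/-- monotonicity of the scaled relative entropy: for a symmetric probability
measure `ρ_N` on `E^N` and a probability measure `ρ` on `E`, for every `1 ≤ k ≤ N`,
`(1/k) H(ρ_{N,k} | ρ^{⊗k}) ≤ (1/N) H(ρ_N | ρ^{⊗N})`. -/
theorem scaled_relative_entropy_monotone
    {E : Type*} [MeasurableSpace E] [TopologicalSpace E] [PolishSpace E] [BorelSpace E]
    (N : ℕ) (hN : 1 ≤ N) (ρN : Measure (Fin N → E)) [IsProbabilityMeasure ρN]
    (hsymm : ∀ σ : Equiv.Perm (Fin N), Measure.map (fun x => x ∘ σ) ρN = ρN)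
    (ρ : Measure E) [IsProbabilityMeasure ρ]
    (k : ℕ) (hk1 : 1 ≤ k) (hkN : k ≤ N) :
    (((k : ℝ)⁻¹ : ℝ) : EReal) *
        relEnt (Measure.map (fun x (i : Fin k) => x (Fin.castLE hkN i)) ρN)
          (Measure.pi fun _ : Fin k => ρ)
      ≤ (((N : ℝ)⁻¹ : ℝ) : EReal) * relEnt ρN (Measure.pi fun _ : Fin N => ρ) :=
  scaled_relative_entropy_monotone_general N ρN hsymm ρ k hk1 hkN
end
end

section
/- Let N ≥ 2, β > 0, U : ℝ^d → ℝ, and W : ℝ^d → ℝ bounded measurable and symmetric with exp(−β E_N) ∈ L¹(ℝ^{Nd}). Let ρ be a probability density on ℝ^d satisfying the fixed-point relation ρ = Z^{−1} exp(−β(U + W∗ρ)) with Z = ∫ exp(−β(U + W∗ρ)) dx. Then the partition functions satisfy Z̄_N ≥ Z^N exp( (Nβ/2) ∫_{ℝ^d} ρ (W∗ρ) dx ), where Z̄_N = ∫_{ℝ^{Nd}} exp(−β E_N) dx; equivalently, the relative entropy H(ρ^{⊗N} | ρ_N) equals log Z̄_N − (Nβ/2)∫ρ(W∗ρ)dx −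 N log Z, which is nonnegative. -/
open MeasureTheory Real

noncomputable section

/-- `ρ` is a probability density on the measure space `α`. -/
def IsProbDensity {α : Type*} [MeasureSpace α] (ρ : α → ℝ) : Prop :=
  Measurable ρ ∧ (∀ x, 0 ≤ ρ x) ∧ ∫ x, ρ x = 1

/-- The convolution `(W∗ρ)(x) = ∫ W(x−y) ρ(y) dy`. -/
def convW {d : ℕ} (W ρ : (Fin d → ℝ) → ℝ) (x : Fin d → ℝ) : ℝ :=
  ∫ y, W (x - y) * ρ y

/-- The probability measure on `ℝ^d` with density `ρ`. -/
def densMeasure {d : ℕ} (ρ : (Fin d → ℝ) → ℝ) : Measure (Fin d → ℝ) :=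
  volume.withDensity fun x => ENNReal.ofReal (ρ x)

/-- The `N`-body energy
`E_N(x_1,…,x_N) = Σ_i U(x_i) + (1/(2(N−1))) Σ_{i≠j} W(x_i − x_j)`. -/
def energyN {d : ℕ} (U W : (Fin d → ℝ) → ℝ) (N : ℕ) (x : Fin N → (Fin d → ℝ)) : ℝ :=
  (∑ i, U (x i)) +
    (1 / (2 * ((N : ℝ) - 1))) * ∑ i, ∑ j ∈ Finset.univ.erase i, W (x i - x j)

/-- The relative entropy `H(μ|ν) = ∫ log (dμ/dν) dμ` (real-valued version). -/
def relEntR {E : Type*} [MeasurableSpace E] (μ ν : Measure E) : ℝ :=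
  ∫ x, Real.log ((μ.rnDeriv ν x).toReal) ∂μ

/-!
Under the product measure `ρ^{⊗N}` the fixed-point relation `log ρ = -β (U + W∗ρ) - log Z` turns
the log-likelihood ratio against the Gibbs measure `ρ_N` into
`log Z̄_N - N log Z + β (E_N - Σ_i (U + W∗ρ)(x_i))`, in which `U` cancels. Every pair `(x_i, x_j)`,
`i ≠ j`, has law `ρ ⊗ ρ`, so both the pair energy `(1/(2(N-1))) Σ_{i≠j} W(x_i - x_j)` and
`Σ_i (W∗ρ)(x_i)` have explicit expectations, `(N/2) ∫ ρ (W∗ρ)` and `N ∫ ρ (W∗ρ)`. This computes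
`H(ρ^{⊗N} | ρ_N)`, and Gibbs' inequality `H ≥ 0` is the lower bound on `Z̄_N`.
-/

lemma relEntR_nonneg {α : Type*} [MeasurableSpace α] {μ ν : Measure α} [IsProbabilityMeasure μ]
    [IsProbabilityMeasure ν] (hμν : μ ≪ ν) (h_int : Integrable (llr μ ν) μ) :
    0 ≤ relEntR μ ν := by
  show 0 ≤ ∫ x, llr μ ν x ∂μ
  simpa using InformationTheory.integral_llr_add_sub_measure_univ_nonneg hμν h_int

lemma llr_withDensity_ofReal {α : Type*} [MeasurableSpace α] {μ : Measure α} [SigmaFinite μ]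
    {p q : α → ℝ} (hp : Measurable p) (hq : Measurable q) (hp0 : ∀ x, 0 < p x)
    (hq0 : ∀ x, 0 < q x) :
    llr (μ.withDensity fun x => ENNReal.ofReal (p x)) (μ.withDensity fun x => ENNReal.ofReal (q x))
      =ᵐ[μ] fun x => log (p x) - log (q x) := by
  have : SigmaFinite (μ.withDensity fun x => ENNReal.ofReal (q x)) :=
    SigmaFinite.withDensity_of_ne_top (ae_of_all _ fun _ => ENNReal.ofReal_ne_top)
  have hpq_meas : Measurable fun x => ENNReal.ofReal (p x / q x) := (hp.div hq).ennreal_ofReal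
  have hpq : μ.withDensity (fun x => ENNReal.ofReal (p x)) =
      (μ.withDensity fun x => ENNReal.ofReal (q x)).withDensity
        fun x => ENNReal.ofReal (p x / q x) := by
    rw [← withDensity_mul _ hq.ennreal_ofReal hpq_meas]
    congr 1 with x
    rw [Pi.mul_apply, ← ENNReal.ofReal_mul (hq0 x).le, mul_div_cancel₀ _ (hq0 x).ne']
  have hrn := Measure.rnDeriv_withDensity (μ.withDensity fun x => ENNReal.ofReal (q x)) hpq_meas
  rw [← hpq] at hrn
  filter_upwards [withDensity_absolutelyContinuous' hq.ennreal_ofReal.aemeasurable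
    (ae_of_all _ fun x => ENNReal.ofReal_ne_zero_iff.mpr (hq0 x)) hrn] with x hx
  rw [llr, hx, ENNReal.toReal_ofReal (div_pos (hp0 x) (hq0 x)).le,
    log_div (hp0 x).ne' (hq0 x).ne']

lemma pi_withDensity_ofReal {ι α : Type*} [Fintype ι] [MeasurableSpace α] (μ : Measure α)
    [SigmaFinite μ] {ρ : α → ℝ} [SigmaFinite (μ.withDensity fun x => ENNReal.ofReal (ρ x))]
    (hρ : Integrable ρ μ) (hρ0 : ∀ x, 0 ≤ ρ x) :
    Measure.pi (fun _ : ι => μ.withDensity fun x => ENNReal.ofReal (ρ x)) =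
      (Measure.pi fun _ => μ).withDensity fun x => ENNReal.ofReal (∏ i, ρ (x i)) := by
  refine Measure.pi_eq fun s hs => ?_
  rw [withDensity_apply _ (.univ_pi hs), Measure.restrict_pi_pi,
    ← ofReal_integral_eq_lintegral_ofReal (.fintype_prod fun i => hρ.restrict)
      (ae_of_all _ fun x => Finset.prod_nonneg fun i _ => hρ0 _),
    integral_fintype_prod_eq_prod (f := fun _ => ρ),
    ENNReal.ofReal_prod_of_nonneg fun i _ => integral_nonneg hρ0]
  refine Finset.prod_congr rfl fun i _ => ?_
  rw [withDensity_apply _ (hs i), ofReal_integral_eq_lintegral_ofReal hρ.restrict (ae_of_all _ hρ0)]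

section EvalPair

variable {ι : Type*} [Fintype ι] {X : ι → Type*} [∀ i, MeasurableSpace (X i)]
  (μ : ∀ i, Measure (X i)) [∀ i, IsProbabilityMeasure (μ i)] {i j : ι}
  {E : Type*} [NormedAddCommGroup E]

lemma measurePreserving_eval_pair (hij : i ≠ j) :
    MeasurePreserving (fun x : ∀ k, X k => (x i, x j)) (Measure.pi μ) ((μ i).prod (μ j)) := by
  classical
  refine ⟨by fun_prop, (Measure.prod_eq fun s t hs ht => ?_).symm⟩
  have hpre : (fun x : ∀ k, X k => (x i, x j)) ⁻¹' s ×ˢ t =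
      Set.univ.pi (Function.update (Function.update (fun _ => Set.univ) i s) j t) := by
    ext x
    simp only [Set.mem_preimage, Set.mem_prod, Set.mem_univ_pi]
    constructor
    · rintro ⟨hs, ht⟩ k
      rcases eq_or_ne k j with rfl | hkj
      · simpa using ht
      rcases eq_or_ne k i with rfl | hki
      · simpa [hkj] using hs
      · simp [hkj, hki]
    · intro h
      exact ⟨by simpa [hij] using h i, by simpa using h j⟩
  rw [Measure.map_apply (by fun_prop) (hs.prod ht), hpre, Measure.pi_pi,
    Fintype.prod_eq_mul i j hij fun k hk => by simp [hk.1, hk.2]]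
  simp [hij]

lemma integrable_comp_eval_pair {F : X i × X j → E} (hF : Integrable F ((μ i).prod (μ j)))
    (hij : i ≠ j) : Integrable (fun x => F (x i, x j)) (Measure.pi μ) :=
  ((measurePreserving_eval_pair μ hij).integrable_comp hF.aestronglyMeasurable).mpr hF

lemma integral_comp_eval_pair [NormedSpace ℝ E] {F : X i × X j → E}
    (hF : AEStronglyMeasurable F ((μ i).prod (μ j))) (hij : i ≠ j) :
    ∫ x, F (x i, x j) ∂Measure.pi μ = ∫ z, F z ∂(μ i).prod (μ j) := by
  have h := measurePreserving_eval_pair μ hij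
  rw [← h.map_eq] at hF ⊢
  exact (integral_map h.measurable.aemeasurable hF).symm

end EvalPair

section IID

variable {ι X : Type*} [Fintype ι] [MeasurableSpace X] (μ : Measure X) [IsProbabilityMeasure μ]

lemma integrable_sum_comp_eval {f : X → ℝ} (hf : Integrable f μ) :
    Integrable (fun x => ∑ i, f (x i)) (Measure.pi fun _ : ι => μ) :=
  integrable_finsetSum _ fun _ _ => integrable_comp_eval hf

lemma integral_sum_comp_eval {f : X → ℝ} (hf : Integrable f μ) :
    ∫ x, ∑ i, f (x i) ∂Measure.pi (fun _ : ι => μ) = Fintype.card ι * ∫ y, f y ∂μ := by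
  rw [integral_finsetSum _ fun i _ => integrable_comp_eval hf]
  simp [integral_comp_eval (μ := fun _ => μ) hf.aestronglyMeasurable]

variable [DecidableEq ι]

lemma integrable_sum_sum_erase_comp_eval_pair {F : X × X → ℝ} (hF : Integrable F (μ.prod μ)) :
    Integrable (fun x => ∑ i, ∑ j ∈ Finset.univ.erase i, F (x i, x j))
      (Measure.pi fun _ : ι => μ) :=
  integrable_finsetSum _ fun _ _ => integrable_finsetSum _ fun _ hj =>
    integrable_comp_eval_pair (fun _ => μ) hF (Finset.ne_of_mem_erase hj).symm

lemma integral_sum_sum_erase_comp_eval_pair {F : X × X → ℝ} (hF : Integrable F (μ.prod μ)) :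
    ∫ x, ∑ i, ∑ j ∈ Finset.univ.erase i, F (x i, x j) ∂Measure.pi (fun _ : ι => μ) =
      Fintype.card ι * (Fintype.card ι - 1) * ∫ z, F z ∂(μ.prod μ) := by
  have hrow : ∀ i : ι, ∫ x, ∑ j ∈ Finset.univ.erase i, F (x i, x j) ∂Measure.pi (fun _ => μ) =
      (Fintype.card ι - 1) * ∫ z, F z ∂(μ.prod μ) := fun i => by
    have hne : ∀ j ∈ Finset.univ.erase i, i ≠ j := fun j hj => (Finset.ne_of_mem_erase hj).symm
    rw [integral_finsetSum _ fun j hj => integrable_comp_eval_pair (fun _ => μ) hF (hne j hj),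
      Finset.sum_congr rfl fun j hj =>
        integral_comp_eval_pair (fun _ => μ) hF.aestronglyMeasurable (hne j hj),
      Finset.sum_const, Finset.card_erase_of_mem (Finset.mem_univ i), nsmul_eq_mul,
      Nat.cast_sub (Finset.card_pos.mpr ⟨i, Finset.mem_univ i⟩), Finset.card_univ, Nat.cast_one]
  rw [integral_finsetSum _ fun i _ => integrable_finsetSum _ fun j hj =>
    integrable_comp_eval_pair (fun _ => μ) hF (Finset.ne_of_mem_erase hj).symm]
  simp only [hrow, Finset.sum_const, Finset.card_univ, nsmul_eq_mul]
  ring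

end IID

namespace IsProbDensity

variable {α : Type*} [MeasureSpace α] {ρ : α → ℝ}

lemma integrable (hρ : IsProbDensity ρ) : Integrable ρ :=
  .of_integral_ne_zero (by rw [hρ.2.2]; exact one_ne_zero)

lemma isProbabilityMeasure_withDensity (hρ : IsProbDensity ρ) :
    IsProbabilityMeasure (volume.withDensity fun x => ENNReal.ofReal (ρ x)) := by
  constructor
  rw [withDensity_apply _ MeasurableSet.univ, Measure.restrict_univ,
    ← ofReal_integral_eq_lintegral_ofReal hρ.integrable (ae_of_all _ hρ.2.1), hρ.2.2,
    ENNReal.ofReal_one]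

lemma integral_withDensity (hρ : IsProbDensity ρ) (g : α → ℝ) :
    ∫ x, g x ∂(volume.withDensity fun x => ENNReal.ofReal (ρ x)) = ∫ x, ρ x * g x := by
  rw [integral_withDensity_eq_integral_toReal_smul hρ.1.ennreal_ofReal
    (ae_of_all _ fun _ => ENNReal.ofReal_lt_top)]
  simp only [ENNReal.toReal_ofReal (hρ.2.1 _), smul_eq_mul]

lemma pos_of_eq_div {f : α → ℝ} {Z : ℝ} (hρ : IsProbDensity ρ) (hf : ∀ x, 0 ≤ f x)
    (hfix : ∀ x, ρ x = f x / Z) : 0 < Z := by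
  by_contra! hZ
  have hρ_zero : ∀ x, ρ x = 0 := fun x =>
    ((hfix x).trans_le (div_nonpos_of_nonneg_of_nonpos (hf x) hZ)).antisymm (hρ.2.1 x)
  simpa [hρ_zero] using hρ.2.2

end IsProbDensity

def partitionFunction {d : ℕ} (β : ℝ) (U W : (Fin d → ℝ) → ℝ) (N : ℕ) : ℝ :=
  ∫ x : Fin N → (Fin d → ℝ), exp (-β * energyN U W N x)

def gibbsMeasure {d : ℕ} (β : ℝ) (U W : (Fin d → ℝ) → ℝ) (N : ℕ) :
    Measure (Fin N → (Fin d → ℝ)) :=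
  volume.withDensity fun x =>
    ENNReal.ofReal (exp (-β * energyN U W N x) / partitionFunction β U W N)

/-- `E_N(x) - Σ_i (U + W∗ρ)(x_i)`, which does not depend on `U`. -/
def meanFieldError {d : ℕ} (W ρ : (Fin d → ℝ) → ℝ) (N : ℕ) (x : Fin N → (Fin d → ℝ)) : ℝ :=
  (1 / (2 * ((N : ℝ) - 1))) * ∑ i, ∑ j ∈ Finset.univ.erase i, W (x i - x j) -
    ∑ i, convW W ρ (x i)

section MeanField

variable {d N : ℕ} {β Z M : ℝ} {U W ρ : (Fin d → ℝ) → ℝ}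

lemma measurable_convW (hW : Measurable W) (hρ : Measurable ρ) : Measurable (convW W ρ) :=
  ((hW.comp (measurable_fst.sub measurable_snd)).mul
    (hρ.comp measurable_snd)).stronglyMeasurable.integral_prod_right'.measurable

lemma measurable_energyN (hU : Measurable U) (hW : Measurable W) (N : ℕ) :
    Measurable (energyN U W N) := by
  unfold energyN
  fun_prop

lemma abs_convW_le (hWbdd : ∀ z, |W z| ≤ M) (hρ : IsProbDensity ρ) (x : Fin d → ℝ) :
    |convW W ρ x| ≤ M := by
  rw [convW]
  calc |∫ y, W (x - y) * ρ y| ≤ ∫ y, M * ρ y :=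
        norm_integral_le_of_norm_le (f := fun y => W (x - y) * ρ y)
          (hρ.integrable.const_mul M) (ae_of_all _ fun y => by
            rw [Real.norm_eq_abs, abs_mul, abs_of_nonneg (hρ.2.1 y)]
            gcongr; exacts [hρ.2.1 y, hWbdd _])
    _ = M := by rw [integral_const_mul, hρ.2.2, mul_one]

lemma integrable_comp_fst_sub_snd {μ : Measure ((Fin d → ℝ) × (Fin d → ℝ))} [IsFiniteMeasure μ]
    (hW : Measurable W) (hWbdd : ∀ z, |W z| ≤ M) :
    Integrable (fun z => W (z.1 - z.2)) μ :=
  .of_bound (hW.comp (by fun_prop)).aestronglyMeasurable M (ae_of_all _ fun _ => hWbdd _)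

lemma integrable_convW {μ : Measure (Fin d → ℝ)} [IsFiniteMeasure μ] (hW : Measurable W)
    (hWbdd : ∀ z, |W z| ≤ M) (hρ : IsProbDensity ρ) : Integrable (convW W ρ) μ :=
  .of_bound (measurable_convW hW hρ.1).aestronglyMeasurable M
    (ae_of_all _ fun y => abs_convW_le hWbdd hρ y)

lemma isProbabilityMeasure_densMeasure (hρ : IsProbDensity ρ) :
    IsProbabilityMeasure (densMeasure ρ) :=
  hρ.isProbabilityMeasure_withDensity

lemma integral_densMeasure (hρ : IsProbDensity ρ) (g : (Fin d → ℝ) → ℝ) :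
    ∫ x, g x ∂densMeasure ρ = ∫ x, ρ x * g x :=
  hρ.integral_withDensity g

lemma pi_densMeasure_eq_withDensity (hρ : IsProbDensity ρ) :
    Measure.pi (fun _ : Fin N => densMeasure ρ) =
      volume.withDensity fun x => ENNReal.ofReal (∏ i, ρ (x i)) := by
  have := isProbabilityMeasure_densMeasure hρ
  rw [volume_pi]
  exact pi_withDensity_ofReal volume hρ.integrable hρ.2.1

lemma integral_comp_sub_densMeasure_prod (hW : Measurable W) (hWbdd : ∀ z, |W z| ≤ M)
    (hρ : IsProbDensity ρ) :
    ∫ z, W (z.1 - z.2) ∂(densMeasure ρ).prod (densMeasure ρ) = ∫ x, ρ x * convW W ρ x := by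
  have := isProbabilityMeasure_densMeasure hρ
  rw [integral_prod (fun z => W (z.1 - z.2)) (integrable_comp_fst_sub_snd hW hWbdd)]
  simp only [integral_densMeasure hρ, convW, mul_comm (ρ _)]

lemma integrable_meanFieldError (hW : Measurable W) (hWbdd : ∀ z, |W z| ≤ M)
    (hρ : IsProbDensity ρ) :
    Integrable (meanFieldError W ρ N) (Measure.pi fun _ => densMeasure ρ) := by
  have := isProbabilityMeasure_densMeasure hρ
  exact ((integrable_sum_sum_erase_comp_eval_pair _
    (integrable_comp_fst_sub_snd hW hWbdd)).const_mul _).sub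
      (integrable_sum_comp_eval _ (integrable_convW hW hWbdd hρ))

lemma integral_meanFieldError (hN : 2 ≤ N) (hW : Measurable W) (hWbdd : ∀ z, |W z| ≤ M)
    (hρ : IsProbDensity ρ) :
    ∫ x, meanFieldError W ρ N x ∂(Measure.pi fun _ => densMeasure ρ) =
      -(N / 2 * ∫ x, ρ x * convW W ρ x) := by
  have := isProbabilityMeasure_densMeasure hρ
  have hW_int := integrable_comp_fst_sub_snd (μ := (densMeasure ρ).prod (densMeasure ρ)) hW hWbdd
  have hc_int := integrable_convW (μ := densMeasure ρ) hW hWbdd hρ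
  have hN1 : (N : ℝ) - 1 ≠ 0 := by
    have : (2 : ℝ) ≤ N := by exact_mod_cast hN
    linarith
  simp only [meanFieldError]
  rw [integral_sub ((integrable_sum_sum_erase_comp_eval_pair _ hW_int).const_mul _)
      (integrable_sum_comp_eval _ hc_int), integral_const_mul,
    integral_sum_sum_erase_comp_eval_pair _ hW_int, integral_sum_comp_eval _ hc_int,
    integral_comp_sub_densMeasure_prod hW hWbdd hρ, integral_densMeasure hρ, Fintype.card_fin]
  field_simp
  ring

lemma log_prod_add_energyN (hZ : 0 < Z)
    (hfix : ∀ x, ρ x = exp (-β * (U x + convW W ρ x)) / Z) (x : Fin N → (Fin d → ℝ)) :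
    log (∏ i, ρ (x i)) + β * energyN U W N x = β * meanFieldError W ρ N x - N * log Z := by
  have hlog : ∀ y, log (ρ y) = -β * (U y + convW W ρ y) - log Z := fun y => by
    rw [hfix y, log_div (exp_pos _).ne' hZ.ne', log_exp]
  rw [log_prod fun i _ => (hfix (x i)).trans_ne (div_pos (exp_pos _) hZ).ne']
  simp only [hlog, energyN, meanFieldError, Finset.sum_sub_distrib, Finset.sum_const,
    Finset.card_univ, Fintype.card_fin, nsmul_eq_mul, ← Finset.mul_sum, Finset.sum_add_distrib]
  ring

lemma partitionFunction_pos
    (hexp : Integrable (fun x : Fin N → (Fin d → ℝ) => exp (-β * energyN U W N x))) :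
    0 < partitionFunction β U W N :=
  integral_exp_pos hexp

lemma isProbabilityMeasure_gibbsMeasure (hU : Measurable U) (hW : Measurable W)
    (hexp : Integrable (fun x : Fin N → (Fin d → ℝ) => exp (-β * energyN U W N x))) :
    IsProbabilityMeasure (gibbsMeasure β U W N) :=
  IsProbDensity.isProbabilityMeasure_withDensity
    ⟨((measurable_energyN hU hW N).const_mul _).exp.div_const _,
      fun _ => div_nonneg (exp_pos _).le (partitionFunction_pos hexp).le,
      by rw [integral_div]; exact div_self (partitionFunction_pos hexp).ne'⟩

lemma absolutelyContinuous_pi_densMeasure_gibbsMeasure (hU : Measurable U) (hW : Measurable W)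
    (hexp : Integrable (fun x : Fin N → (Fin d → ℝ) => exp (-β * energyN U W N x)))
    (hρ : IsProbDensity ρ) :
    Measure.pi (fun _ : Fin N => densMeasure ρ) ≪ gibbsMeasure β U W N := by
  rw [pi_densMeasure_eq_withDensity hρ]
  refine (withDensity_absolutelyContinuous _ _).trans (withDensity_absolutelyContinuous'
    (((measurable_energyN hU hW N).const_mul _).exp.div_const _).ennreal_ofReal.aemeasurable
    (ae_of_all _ fun x => ?_))
  exact ENNReal.ofReal_ne_zero_iff.mpr (div_pos (exp_pos _) (partitionFunction_pos hexp))

lemma llr_pi_densMeasure_gibbsMeasure (hU : Measurable U) (hW : Measurable W)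
    (hexp : Integrable (fun x : Fin N → (Fin d → ℝ) => exp (-β * energyN U W N x)))
    (hρ : IsProbDensity ρ) (hZ : 0 < Z) (hfix : ∀ x, ρ x = exp (-β * (U x + convW W ρ x)) / Z) :
    llr (Measure.pi fun _ => densMeasure ρ) (gibbsMeasure β U W N)
      =ᵐ[Measure.pi fun _ => densMeasure ρ]
      fun x => log (partitionFunction β U W N) - N * log Z + β * meanFieldError W ρ N x := by
  have hZb := partitionFunction_pos hexp
  have hρ_pos : ∀ y, 0 < ρ y := fun y => (hfix y).trans_gt (div_pos (exp_pos _) hZ)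
  rw [pi_densMeasure_eq_withDensity hρ, gibbsMeasure]
  refine (withDensity_absolutelyContinuous _ _).ae_le ?_
  filter_upwards [llr_withDensity_ofReal (p := fun x => ∏ i, ρ (x i))
    (q := fun x => exp (-β * energyN U W N x) / partitionFunction β U W N)
    (Finset.measurable_prod _ fun i _ => hρ.1.comp (measurable_pi_apply i))
    (((measurable_energyN hU hW N).const_mul (-β)).exp.div_const _)
    (fun x => Finset.prod_pos fun i _ => hρ_pos (x i))
    (fun x => div_pos (exp_pos _) hZb)] with x hx
  rw [hx, log_div (exp_pos _).ne' hZb.ne', log_exp]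
  linarith [log_prod_add_energyN hZ hfix x]

lemma relEntR_pi_densMeasure_gibbsMeasure (hN : 2 ≤ N) (hU : Measurable U) (hW : Measurable W)
    (hWbdd : ∀ z, |W z| ≤ M)
    (hexp : Integrable (fun x : Fin N → (Fin d → ℝ) => exp (-β * energyN U W N x)))
    (hρ : IsProbDensity ρ) (hZ : 0 < Z) (hfix : ∀ x, ρ x = exp (-β * (U x + convW W ρ x)) / Z) :
    relEntR (Measure.pi fun _ => densMeasure ρ) (gibbsMeasure β U W N) =
      log (partitionFunction β U W N) - N * β / 2 * (∫ x, ρ x * convW W ρ x) - N * log Z := by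
  have := isProbabilityMeasure_densMeasure hρ
  change ∫ x, llr _ _ x ∂_ = _
  rw [integral_congr_ae (llr_pi_densMeasure_gibbsMeasure hU hW hexp hρ hZ hfix),
    integral_add (integrable_const _) ((integrable_meanFieldError hW hWbdd hρ).const_mul β),
    integral_const, integral_const_mul, integral_meanFieldError hN hW hWbdd hρ]
  simp only [probReal_univ, one_smul]
  ring

lemma relEntR_pi_densMeasure_gibbsMeasure_nonneg (hU : Measurable U) (hW : Measurable W)
    (hWbdd : ∀ z, |W z| ≤ M)
    (hexp : Integrable (fun x : Fin N → (Fin d → ℝ) => exp (-β * energyN U W N x)))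
    (hρ : IsProbDensity ρ) (hZ : 0 < Z) (hfix : ∀ x, ρ x = exp (-β * (U x + convW W ρ x)) / Z) :
    0 ≤ relEntR (Measure.pi fun _ => densMeasure ρ) (gibbsMeasure β U W N) := by
  have := isProbabilityMeasure_densMeasure hρ
  have := isProbabilityMeasure_gibbsMeasure hU hW hexp
  exact relEntR_nonneg (absolutelyContinuous_pi_densMeasure_gibbsMeasure hU hW hexp hρ)
    (((integrable_const _).add ((integrable_meanFieldError hW hWbdd hρ).const_mul β)).congr
      (llr_pi_densMeasure_gibbsMeasure hU hW hexp hρ hZ hfix).symm)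

end MeanField

theorem partition_function_lower_bound_general {d N : ℕ} (hN : 2 ≤ N) (β : ℝ)
    (U W : (Fin d → ℝ) → ℝ) (hU : Measurable U) (hW : Measurable W)
    (M : ℝ) (hWbdd : ∀ z, |W z| ≤ M)
    (hexp : Integrable (fun x : Fin N → (Fin d → ℝ) => Real.exp (-β * energyN U W N x)))
    (ρ : (Fin d → ℝ) → ℝ) (hρ : IsProbDensity ρ)
    (Z : ℝ)
    (hfix : ∀ x, ρ x = Real.exp (-β * (U x + convW W ρ x)) / Z) :
    (∫ x : Fin N → (Fin d → ℝ), Real.exp (-β * energyN U W N x))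
        ≥ Z ^ N * Real.exp (((N : ℝ) * β / 2) * ∫ x, ρ x * convW W ρ x) ∧
    relEntR (Measure.pi fun _ : Fin N => densMeasure ρ)
        (volume.withDensity fun x : Fin N → (Fin d → ℝ) =>
          ENNReal.ofReal (Real.exp (-β * energyN U W N x) /
            ∫ y : Fin N → (Fin d → ℝ), Real.exp (-β * energyN U W N y)))
      = Real.log (∫ x : Fin N → (Fin d → ℝ), Real.exp (-β * energyN U W N x))
        - ((N : ℝ) * β / 2) * (∫ x, ρ x * convW W ρ x) - (N : ℝ) * Real.log Z ∧
    0 ≤ Real.log (∫ x : Fin N → (Fin d → ℝ), Real.exp (-β * energyN U W N x))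
        - ((N : ℝ) * β / 2) * (∫ x, ρ x * convW W ρ x) - (N : ℝ) * Real.log Z := by
  have hZ : 0 < Z := hρ.pos_of_eq_div (fun _ => (exp_pos _).le) hfix
  have hZb : 0 < partitionFunction β U W N := partitionFunction_pos hexp
  have hrel := relEntR_pi_densMeasure_gibbsMeasure hN hU hW hWbdd hexp hρ hZ hfix
  have hgibbs := relEntR_pi_densMeasure_gibbsMeasure_nonneg hU hW hWbdd hexp hρ hZ hfix
  refine ⟨?_, hrel, hrel ▸ hgibbs⟩
  calc Z ^ N * exp (N * β / 2 * ∫ x, ρ x * convW W ρ x)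
      = exp (N * log Z + N * β / 2 * ∫ x, ρ x * convW W ρ x) := by
        rw [exp_add, exp_nat_mul, exp_log hZ]
    _ ≤ exp (log (partitionFunction β U W N)) := exp_le_exp.mpr (by linarith)
    _ = partitionFunction β U W N := exp_log hZb

/-- for a fixed point `ρ = Z⁻¹ exp(−β(U + W∗ρ))` of the mean-field equation, the
partition functions satisfy `Z̄_N ≥ Z^N exp((Nβ/2)∫ρ(W∗ρ))`; equivalently, the relative entropy
`H(ρ^{⊗N}|ρ_N)` equals `log Z̄_N − (Nβ/2)∫ρ(W∗ρ) − N log Z`, which is nonnegative. -/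
theorem partition_function_lower_bound {d N : ℕ} (hN : 2 ≤ N) (β : ℝ) (hβ : 0 < β)
    (U W : (Fin d → ℝ) → ℝ) (hU : Measurable U) (hW : Measurable W)
    (M : ℝ) (hWbdd : ∀ z, |W z| ≤ M) (hWsymm : ∀ z, W (-z) = W z)
    (hexp : Integrable (fun x : Fin N → (Fin d → ℝ) => Real.exp (-β * energyN U W N x)))
    (ρ : (Fin d → ℝ) → ℝ) (hρ : IsProbDensity ρ)
    (Z : ℝ) (hZ : Z = ∫ x, Real.exp (-β * (U x + convW W ρ x)))
    (hfix : ∀ x, ρ x = Real.exp (-β * (U x + convW W ρ x)) / Z) :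
    (∫ x : Fin N → (Fin d → ℝ), Real.exp (-β * energyN U W N x))
        ≥ Z ^ N * Real.exp (((N : ℝ) * β / 2) * ∫ x, ρ x * convW W ρ x) ∧
    relEntR (Measure.pi fun _ : Fin N => densMeasure ρ)
        (volume.withDensity fun x : Fin N → (Fin d → ℝ) =>
          ENNReal.ofReal (Real.exp (-β * energyN U W N x) /
            ∫ y : Fin N → (Fin d → ℝ), Real.exp (-β * energyN U W N y)))
      = Real.log (∫ x : Fin N → (Fin d → ℝ), Real.exp (-β * energyN U W N x))
        - ((N : ℝ) * β / 2) * (∫ x, ρ x * convW W ρ x) - (N : ℝ) * Real.log Z ∧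
    0 ≤ Real.log (∫ x : Fin N → (Fin d → ℝ), Real.exp (-β * energyN U W N x))
        - ((N : ℝ) * β / 2) * (∫ x, ρ x * convW W ρ x) - (N : ℝ) * Real.log Z :=
  partition_function_lower_bound_general hN β U W hU hW M hWbdd hexp ρ hρ Z hfix
end
end
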